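/- Let f = (f_n)_{n=0}^M be a sequence in X with f_0 + f_1 + ⋯ + f_M = 0, and let k be an integer with 1 ≤ k ≤ M−1. Then for every k ≤ n ≤ M, ‖D^k f_n‖ ≤ c_{A,1} · ‖D^k f‖_0^{1/2} · ‖D^k f‖_1^{1/2}, where c_{A,1} = (1 + (√2 c_A)^{4/3})^{3/4} and c_A = √(2 + √2/2). -/

import Mathlib

noncomputable def cA : ℝ := Real.sqrt (2 + Real.sqrt 2 / 2)
noncomputable def cA1 : ℝ := (1 + (Real.sqrt 2 * cA) ^ ((4:ℝ)/3)) ^ ((3:ℝ)/4)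
noncomputable def cB1 : ℝ := 2 * Real.sqrt (1 + 2 * (cA * cA1)^2)

/-- `dAux j = (d̂_j, ∏_{i≤j} d̂_i^{1/(i+1)})`, realizing the recursion (4.20). -/
noncomputable def dAux : ℕ → ℝ × ℝ
  | 0 => (cB1, cB1)
  | (j+1) =>
      let d : ℝ := (1 + (dAux j).1 ^ (2*((j:ℝ)+2))) ^ (((j:ℝ)+2) / (2*((j:ℝ)+1)*((j:ℝ)+3))) *
                   ((dAux j).2) ^ (((j:ℝ)+2) / (((j:ℝ)+1)*((j:ℝ)+3)))
      (d, (dAux j).2 * d ^ (1/((j:ℝ)+2)))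

noncomputable def dHat (j : ℕ) : ℝ := (dAux j).1

/-- `cAux j = (ĉ_j, ∏_{i≤j} ĉ_i^{1/(i+1)})`, realizing the recursion (4.19). -/
noncomputable def cAux : ℕ → ℝ × ℝ
  | 0 => (cB1 / Real.sqrt 2, cB1 / Real.sqrt 2)
  | (j+1) =>
      let c : ℝ := (1 + dHat j ^ (2*((j:ℝ)+2))) ^ (((j:ℝ)+2) / (2*((j:ℝ)+1)*((j:ℝ)+3))) *
                   ((cAux j).2) ^ (((j:ℝ)+2) / (((j:ℝ)+1)*((j:ℝ)+3)))
      (c, (cAux j).2 * c ^ (1/((j:ℝ)+2)))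

noncomputable def cHat (j : ℕ) : ℝ := (cAux j).1

/-- the constant `c_m = ∏_{j=0}^{m-2} ĉ_j^{1/(j+1)}` (equal to `1` for `m = 1`). -/
noncomputable def cConst (m : ℕ) : ℝ := ∏ j ∈ Finset.range (m-1), cHat j ^ (1/((j:ℝ)+1))

/-- backward difference quotient of a sequence. -/
noncomputable def Dq {X : Type*} [NormedAddCommGroup X] [NormedSpace ℝ X] (τ : ℝ) (f : ℕ → X) : ℕ → X :=
  fun n => τ⁻¹ • (f n - f (n - 1))

/-- discrete `L²` norm `(τ Σ_{n=a}^{b} ‖f n‖²)^{1/2}`. -/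
noncomputable def seqNorm0 {X : Type*} [NormedAddCommGroup X]
    (τ : ℝ) (a b : ℕ) (f : ℕ → X) : ℝ :=
  Real.sqrt (τ * ∑ n ∈ Finset.Icc a b, ‖f n‖^2)

/-- `T_0 = T` and `T_j = (M+1−j)τ` for `j ≥ 1`. -/
noncomputable def Tk (τ T : ℝ) (M j : ℕ) : ℝ := if j = 0 then T else ((M:ℝ) + 1 - (j:ℝ)) * τ

/-- the scale-invariant norm `‖Dᵏf‖_m = (Σ_{j=k}^{k+m} T_j^{−2(m+k−j)} ‖Dʲf‖₀²)^{1/2}`. -/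
noncomputable def normm {X : Type*} [NormedAddCommGroup X] [NormedSpace ℝ X]
    (τ T : ℝ) (M k m : ℕ) (f : ℕ → X) : ℝ :=
  Real.sqrt (∑ j ∈ Finset.Icc k (k+m),
    (seqNorm0 τ j M ((Dq τ)^[j] f))^2 / (Tk τ T M j)^(2*(m+k-j)))

/-!
Write `g = Dᵏf`. Some `g_m` has `‖g_m‖²` at most the mean `τ Σ ‖g_i‖² / T_k`, and by
`|‖x‖² - ‖y‖²| ≤ ‖x - y‖ (‖x‖ + ‖y‖)` and Cauchy–Schwarz the total variation of `i ↦ ‖g_i‖²`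
on `[k, M]` is at most `2 ‖Dᵏf‖₀ ‖Dᵏ⁺¹f‖₀`. Hence
`‖g_n‖² ≤ ‖Dᵏf‖₀ (‖Dᵏf‖₀ / T_k + 2 ‖Dᵏ⁺¹f‖₀) ≤ √5 ‖Dᵏf‖₀ ‖Dᵏf‖₁`, and `√5 ≤ c_{A,1}²`.
-/

open Finset

lemma abs_sq_norm_sub_sq_norm_le {E : Type*} [SeminormedAddCommGroup E] (x y : E) :
    |‖x‖ ^ 2 - ‖y‖ ^ 2| ≤ ‖x - y‖ * (‖x‖ + ‖y‖) := by
  rw [show ‖x‖ ^ 2 - ‖y‖ ^ 2 = (‖x‖ - ‖y‖) * (‖x‖ + ‖y‖) by ring, abs_mul,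
    abs_of_nonneg (by positivity : 0 ≤ ‖x‖ + ‖y‖)]
  exact mul_le_mul_of_nonneg_right (abs_norm_sub_norm_le x y) (by positivity)

lemma sum_Icc_succ_eq_sum_Ico {M : Type*} [AddCommMonoid M] (φ : ℕ → M) (a b : ℕ) :
    ∑ i ∈ Icc (a + 1) b, φ i = ∑ i ∈ Ico a b, φ (i + 1) := by
  rw [← Ico_add_one_right_eq_Icc, sum_Ico_add']

lemma le_add_sum_abs_sub_pred (F : ℕ → ℝ) {a b m n : ℕ} (hm : m ∈ Icc a b) (hn : n ∈ Icc a b) :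
    F n ≤ F m + ∑ i ∈ Icc (a + 1) b, |F i - F (i - 1)| := by
  rw [mem_Icc] at hm hn
  have hsum : ∑ i ∈ Icc (a + 1) b, |F i - F (i - 1)| = ∑ i ∈ Ico a b, dist (F i) (F (i + 1)) := by
    simp only [sum_Icc_succ_eq_sum_Ico, Nat.add_sub_cancel, Real.dist_eq, abs_sub_comm]
  have hchain : ∀ p q, a ≤ p → p ≤ q → q ≤ b →
      dist (F p) (F q) ≤ ∑ i ∈ Ico a b, dist (F i) (F (i + 1)) := fun p q hap hpq hqb =>
    (dist_le_Ico_sum_dist F hpq).trans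
      (sum_le_sum_of_subset_of_nonneg (Ico_subset_Ico hap hqb) fun _ _ _ => dist_nonneg)
  have hdist : dist (F n) (F m) ≤ ∑ i ∈ Ico a b, dist (F i) (F (i + 1)) := by
    rcases le_total m n with h | h
    · rw [dist_comm]; exact hchain m n hm.1 h hn.2
    · exact hchain n m hn.1 h hm.2
  rw [hsum]
  linarith [le_abs_self (F n - F m), Real.dist_eq (F n) (F m)]

section DiscreteNorms

variable {X : Type*} [NormedAddCommGroup X] {τ : ℝ}

lemma seqNorm0_nonneg (τ : ℝ) (a b : ℕ) (g : ℕ → X) : 0 ≤ seqNorm0 τ a b g :=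
  Real.sqrt_nonneg _

lemma seqNorm0_sq (hτ : 0 ≤ τ) (a b : ℕ) (g : ℕ → X) :
    seqNorm0 τ a b g ^ 2 = τ * ∑ n ∈ Icc a b, ‖g n‖ ^ 2 :=
  Real.sq_sqrt (by positivity)

lemma seqNorm0_le_of_sum_le (hτ : 0 ≤ τ) {a b a' b' : ℕ} {g g' : ℕ → X}
    (h : ∑ n ∈ Icc a' b', ‖g' n‖ ^ 2 ≤ ∑ n ∈ Icc a b, ‖g n‖ ^ 2) :
    seqNorm0 τ a' b' g' ≤ seqNorm0 τ a b g :=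
  Real.sqrt_le_sqrt (mul_le_mul_of_nonneg_left h hτ)

lemma seqNorm0_succ_le (hτ : 0 ≤ τ) (a b : ℕ) (g : ℕ → X) :
    seqNorm0 τ (a + 1) b g ≤ seqNorm0 τ a b g :=
  seqNorm0_le_of_sum_le hτ <| sum_le_sum_of_subset_of_nonneg
    (Icc_subset_Icc (Nat.le_succ a) le_rfl) fun _ _ _ => by positivity

lemma seqNorm0_comp_pred_le (hτ : 0 ≤ τ) (a b : ℕ) (g : ℕ → X) :
    seqNorm0 τ (a + 1) b (fun i => g (i - 1)) ≤ seqNorm0 τ a b g := by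
  refine seqNorm0_le_of_sum_le hτ ?_
  simp only [sum_Icc_succ_eq_sum_Ico, Nat.add_sub_cancel]
  exact sum_le_sum_of_subset_of_nonneg Ico_subset_Icc_self fun _ _ _ => by positivity

lemma mul_sum_norm_mul_norm_le {Y : Type*} [NormedAddCommGroup Y] (hτ : 0 ≤ τ) (a b : ℕ)
    (u : ℕ → X) (v : ℕ → Y) :
    τ * ∑ i ∈ Icc a b, ‖u i‖ * ‖v i‖ ≤ seqNorm0 τ a b u * seqNorm0 τ a b v := by
  have hcs := Real.sum_mul_le_sqrt_mul_sqrt (Icc a b) (fun i => ‖u i‖) (fun i => ‖v i‖)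
  calc τ * ∑ i ∈ Icc a b, ‖u i‖ * ‖v i‖
      ≤ √τ * √τ * (√(∑ i ∈ Icc a b, ‖u i‖ ^ 2) * √(∑ i ∈ Icc a b, ‖v i‖ ^ 2)) := by
        rw [Real.mul_self_sqrt hτ]; exact mul_le_mul_of_nonneg_left hcs hτ
    _ = seqNorm0 τ a b u * seqNorm0 τ a b v := by
        simp only [seqNorm0, Real.sqrt_mul hτ]; ring

lemma exists_sq_norm_le_seqNorm0_sq_div (hτ : 0 < τ) (g : ℕ → X) {a b : ℕ} (hab : a ≤ b) :
    ∃ m ∈ Icc a b, ‖g m‖ ^ 2 ≤ seqNorm0 τ a b g ^ 2 / (((b : ℝ) + 1 - a) * τ) := by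
  have hlen : ((b + 1 - a : ℕ) : ℝ) = (b : ℝ) + 1 - a := by
    rw [Nat.cast_sub (by omega)]; push_cast; ring
  refine exists_le_of_sum_le (nonempty_Icc.mpr hab) (le_of_eq ?_)
  rw [sum_const, Nat.card_Icc, nsmul_eq_mul, hlen, seqNorm0_sq hτ.le]
  have : (b : ℝ) + 1 - a ≠ 0 := by
    have : (a : ℝ) ≤ b := by exact_mod_cast hab
    linarith
  field_simp

end DiscreteNorms

section DiscreteAgmon

variable {X : Type*} [NormedAddCommGroup X] [NormedSpace ℝ X] {τ : ℝ}

lemma norm_sub_pred_eq_mul_norm_Dq (hτ : 0 < τ) (g : ℕ → X) (i : ℕ) :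
    ‖g i - g (i - 1)‖ = τ * ‖Dq τ g i‖ := by
  rw [Dq, norm_smul, norm_inv, Real.norm_of_nonneg hτ.le, mul_inv_cancel_left₀ hτ.ne']

lemma sum_abs_sq_norm_sub_pred_le (hτ : 0 < τ) (g : ℕ → X) (a b : ℕ) :
    ∑ i ∈ Icc (a + 1) b, |‖g i‖ ^ 2 - ‖g (i - 1)‖ ^ 2| ≤
      2 * (seqNorm0 τ a b g * seqNorm0 τ (a + 1) b (Dq τ g)) := by
  have hterm : ∀ i, |‖g i‖ ^ 2 - ‖g (i - 1)‖ ^ 2| ≤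
      τ * (‖Dq τ g i‖ * ‖g i‖) + τ * (‖Dq τ g i‖ * ‖g (i - 1)‖) := fun i => by
    have := abs_sq_norm_sub_sq_norm_le (g i) (g (i - 1))
    rw [norm_sub_pred_eq_mul_norm_Dq hτ] at this
    linarith
  have hcur := mul_sum_norm_mul_norm_le hτ.le (a + 1) b (Dq τ g) g
  have hprev := mul_sum_norm_mul_norm_le hτ.le (a + 1) b (Dq τ g) (fun i => g (i - 1))
  have hB := seqNorm0_nonneg τ (a + 1) b (Dq τ g)
  calc ∑ i ∈ Icc (a + 1) b, |‖g i‖ ^ 2 - ‖g (i - 1)‖ ^ 2|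
      ≤ τ * ∑ i ∈ Icc (a + 1) b, ‖Dq τ g i‖ * ‖g i‖
        + τ * ∑ i ∈ Icc (a + 1) b, ‖Dq τ g i‖ * ‖g (i - 1)‖ := by
        rw [mul_sum, mul_sum, ← sum_add_distrib]; exact sum_le_sum fun i _ => hterm i
    _ ≤ seqNorm0 τ (a + 1) b (Dq τ g) * seqNorm0 τ a b g
        + seqNorm0 τ (a + 1) b (Dq τ g) * seqNorm0 τ a b g :=
        add_le_add
          (hcur.trans (mul_le_mul_of_nonneg_left (seqNorm0_succ_le hτ.le a b g) hB))
          (hprev.trans (mul_le_mul_of_nonneg_left (seqNorm0_comp_pred_le hτ.le a b g) hB))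
    _ = _ := by ring

theorem sq_norm_le_seqNorm0_mul (hτ : 0 < τ) (g : ℕ → X) {a b n : ℕ} (han : a ≤ n) (hnb : n ≤ b) :
    ‖g n‖ ^ 2 ≤ seqNorm0 τ a b g *
      (seqNorm0 τ a b g / (((b : ℝ) + 1 - a) * τ) + 2 * seqNorm0 τ (a + 1) b (Dq τ g)) := by
  obtain ⟨m, hm, hgm⟩ := exists_sq_norm_le_seqNorm0_sq_div hτ g (han.trans hnb)
  have hvar := le_add_sum_abs_sub_pred (fun i => ‖g i‖ ^ 2) hm (mem_Icc.mpr ⟨han, hnb⟩)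
  have hinc := sum_abs_sq_norm_sub_pred_le hτ g a b
  calc ‖g n‖ ^ 2 ≤ seqNorm0 τ a b g ^ 2 / (((b : ℝ) + 1 - a) * τ)
        + 2 * (seqNorm0 τ a b g * seqNorm0 τ (a + 1) b (Dq τ g)) := by linarith
    _ = _ := by ring

end DiscreteAgmon

lemma cA1_nonneg : 0 ≤ cA1 := by
  unfold cA1 cA
  positivity

lemma five_le_cA1_pow_four : 5 ≤ cA1 ^ 4 := by
  have hcA : 1 ≤ cA := Real.one_le_sqrt.mpr (by linarith [Real.sqrt_nonneg 2])
  have hbase : 2 ≤ 1 + (Real.sqrt 2 * cA) ^ ((4 : ℝ) / 3) := by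
    have : 1 ≤ Real.sqrt 2 * cA := one_le_mul_of_one_le_of_one_le
      (Real.one_le_sqrt.mpr (by norm_num)) hcA
    linarith [Real.one_le_rpow this (by norm_num : (0 : ℝ) ≤ 4 / 3)]
  have hpow : cA1 ^ 4 = (1 + (Real.sqrt 2 * cA) ^ ((4 : ℝ) / 3)) ^ 3 := by
    rw [cA1, ← Real.rpow_mul_natCast (by linarith)]
    norm_num
  rw [hpow]
  nlinarith [pow_le_pow_left₀ (by norm_num) hbase 3]

lemma add_two_mul_le_cA1_sq_mul_sqrt (x y : ℝ) : x + 2 * y ≤ cA1 ^ 2 * √(x ^ 2 + y ^ 2) := by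
  have hcs : (x + 2 * y) ^ 2 ≤ 5 * (x ^ 2 + y ^ 2) := by nlinarith [sq_nonneg (2 * x - y)]
  have hle : (x + 2 * y) ^ 2 ≤ (cA1 ^ 2) ^ 2 * (x ^ 2 + y ^ 2) := by
    nlinarith [five_le_cA1_pow_four, sq_nonneg x, sq_nonneg y]
  calc x + 2 * y ≤ |x + 2 * y| := le_abs_self _
    _ ≤ √((cA1 ^ 2) ^ 2 * (x ^ 2 + y ^ 2)) := Real.abs_le_sqrt hle
    _ = cA1 ^ 2 * √(x ^ 2 + y ^ 2) := by
        rw [Real.sqrt_mul (by positivity), Real.sqrt_sq (by positivity)]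

lemma normm_one_eq {X : Type*} [NormedAddCommGroup X] [NormedSpace ℝ X]
    (τ T : ℝ) (M : ℕ) {k : ℕ} (hk : k ≠ 0) (f : ℕ → X) :
    normm τ T M k 1 f = √((seqNorm0 τ k M ((Dq τ)^[k] f) / (((M : ℝ) + 1 - k) * τ)) ^ 2
      + seqNorm0 τ (k + 1) M (Dq τ ((Dq τ)^[k] f)) ^ 2) := by
  have htwo : 2 * (1 + k - k) = 2 := by omega
  have hzero : 2 * (1 + k - (k + 1)) = 0 := by omega
  rw [normm, sum_Icc_succ_top (Nat.le_succ k), Icc_self, sum_singleton, Tk, if_neg hk, htwo,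
    hzero, pow_zero, div_one, div_pow, Function.iterate_succ_apply']

theorem agmon_dq_general
    {X : Type*} [NormedAddCommGroup X] [InnerProductSpace ℝ X]
    (T : ℝ) (hT : 0 < T) (M : ℕ) (hM : 0 < M) (τ : ℝ) (hτ : τ = T / M)
    (f : ℕ → X)
    (k : ℕ) (hk : 1 ≤ k)
    (n : ℕ) (hnk : k ≤ n) (hnM : n ≤ M) :
    ‖(Dq τ)^[k] f n‖ ≤
      cA1 * (seqNorm0 τ k M ((Dq τ)^[k] f)) ^ ((1:ℝ)/2) *
        (normm τ T M k 1 f) ^ ((1:ℝ)/2) := by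
  have hτ0 : 0 < τ := hτ ▸ div_pos hT (Nat.cast_pos.mpr hM)
  set A := seqNorm0 τ k M ((Dq τ)^[k] f)
  have hA : 0 ≤ A := seqNorm0_nonneg τ k M _
  have hsq : ‖(Dq τ)^[k] f n‖ ^ 2 ≤ cA1 ^ 2 * A * normm τ T M k 1 f := by
    rw [normm_one_eq τ T M (by omega) f]
    calc ‖(Dq τ)^[k] f n‖ ^ 2
        ≤ A * (A / (((M : ℝ) + 1 - k) * τ) + 2 * seqNorm0 τ (k + 1) M (Dq τ ((Dq τ)^[k] f))) :=
          sq_norm_le_seqNorm0_mul hτ0 _ hnk hnM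
      _ ≤ A * (cA1 ^ 2 * √((A / (((M : ℝ) + 1 - k) * τ)) ^ 2
            + seqNorm0 τ (k + 1) M (Dq τ ((Dq τ)^[k] f)) ^ 2)) :=
          mul_le_mul_of_nonneg_left (add_two_mul_le_cA1_sq_mul_sqrt _ _) hA
      _ = _ := by ring
  rw [← Real.sqrt_eq_rpow, ← Real.sqrt_eq_rpow, ← Real.sqrt_sq (norm_nonneg _),
    ← Real.sqrt_sq cA1_nonneg, ← Real.sqrt_mul (sq_nonneg _),
    ← Real.sqrt_mul (mul_nonneg (sq_nonneg _) hA)]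
  exact Real.sqrt_le_sqrt (by linarith)

/-- Lemma 4.5: discrete Agmon inequality for difference quotients whose mean
need not vanish: `‖Dᵏf_n‖ ≤ c_{A,1} ‖Dᵏf‖₀^{1/2} ‖Dᵏf‖₁^{1/2}`. -/
theorem agmon_dq
    {X : Type*} [NormedAddCommGroup X] [InnerProductSpace ℝ X] [CompleteSpace X]
    (T : ℝ) (hT : 0 < T) (M : ℕ) (hM : 0 < M) (τ : ℝ) (hτ : τ = T / M)
    (f : ℕ → X) (hmean : ∑ n ∈ Finset.range (M + 1), f n = 0)
    (k : ℕ) (hk : 1 ≤ k) (hkM : k + 1 ≤ M)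
    (n : ℕ) (hnk : k ≤ n) (hnM : n ≤ M) :
    ‖(Dq τ)^[k] f n‖ ≤
      cA1 * (seqNorm0 τ k M ((Dq τ)^[k] f)) ^ ((1:ℝ)/2) *
        (normm τ T M k 1 f) ^ ((1:ℝ)/2) :=
  agmon_dq_general T hT M hM τ hτ f k hk n hnk hnM
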